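/- Let N be a group and H a subgroup of N whose normalizer in N equals H. For any natural number s, if the (s+1)-st term of the lower central series of N is contained in H, then the s-th term of the lower central series of N is contained in H. -/

import Mathlib

/-- Let `N` be a group and `H` a self-normalizing subgroup of `N`.
If the `(s+1)`-st term of the lower central series of `N` is contained in `H`,
then so is the `s`-th term. -/
theorem lowerCentralSeries_le_of_succ_le
    {N : Type*} [Group N] (H : Subgroup N) (h : Subgroup.normalizer (H : Set N) = H)
    (s : ℕ) (hs : (⊤ : Subgroup N).lowerCentralSeries (s + 1) ≤ H) :
    (⊤ : Subgroup N).lowerCentralSeries s ≤ H := by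
  rw [← h, Subgroup.le_normalizer_iff_commutator_le_left]
  calc ⁅H, (⊤ : Subgroup N).lowerCentralSeries s⁆
      ≤ ⁅⊤, (⊤ : Subgroup N).lowerCentralSeries s⁆ := Subgroup.commutator_mono le_top le_rfl
    _ = (⊤ : Subgroup N).lowerCentralSeries (s + 1) := by
      rw [Subgroup.commutator_comm, Subgroup.lowerCentralSeries_succ]
    _ ≤ H := hs
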